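/- Let X be a real random variable and (cₙ) positive reals with cₙ/√n nondecreasing and tending to infinity, satisfying: for every ε > 0 there exists mₑ ≥ 1 such that cₙ/cₘ ≤ (1+ε)(n/m) for all mₑ ≤ m < n. If ∑ₙ P(|X| ≥ cₙ) < ∞, then E[|X| 1{|X| > cₙ}] = o(cₙ/n) as n → ∞. -/
import Mathlib


open MeasureTheory ProbabilityTheory Filter Set
open scoped ProbabilityTheory
open scoped ENNReal

private
lemma aux_nat_mul (q : ℕ → ℝ) (hq0 : ∀ n, 0 ≤ q n)
    (hanti : ∀ m n, 1 ≤ m → m ≤ n → q n ≤ q m) (hsum : Summable q) :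
    Tendsto (fun n : ℕ => (n : ℝ) * q n) atTop (nhds 0) := by
  have ht : Tendsto (fun i => ∑' k, q (k + i)) atTop (nhds 0) := tendsto_sum_nat_add q
  have ht2 : Tendsto (fun n : ℕ => 2 * ∑' k, q (k + n / 2)) atTop (nhds 0) := by
    have := ht.comp (tendsto_atTop_atTop_of_monotone (f := fun n : ℕ => n / 2)
      (fun a b h => Nat.div_le_div_right h) (fun b => ⟨2 * b, by simp⟩))
    simpa using (this.const_mul 2)
  apply squeeze_zero' (g := fun n : ℕ => 2 * ∑' k, q (k + n / 2)) ?_ ?_ ht2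
  · filter_upwards [eventually_ge_atTop 0] with n _
    exact mul_nonneg (Nat.cast_nonneg n) (hq0 n)
  · filter_upwards [eventually_ge_atTop 2] with n hn
    have hkey : (n : ℝ) * q n ≤ 2 * ∑ k ∈ Finset.Ico (n / 2) n, q k := by
      have hcard : (Finset.Ico (n / 2) n).card = n - n / 2 := Nat.card_Ico _ _
      have hsumge : (↑(n - n / 2) : ℝ) * q n ≤ ∑ k ∈ Finset.Ico (n / 2) n, q k := by
        rw [← hcard]
        have := Finset.card_nsmul_le_sum (Finset.Ico (n / 2) n) q (q n)
          (fun k hk => by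
            have hk' := Finset.mem_Ico.mp hk
            exact hanti k n (by omega) (le_of_lt hk'.2))
        simpa [nsmul_eq_mul] using this
      have h2 : (n : ℝ) ≤ 2 * (↑(n - n / 2) : ℝ) := by
        have : n ≤ 2 * (n - n / 2) := by omega
        exact_mod_cast this
      calc (n : ℝ) * q n ≤ 2 * (↑(n - n / 2) : ℝ) * q n :=
            mul_le_mul_of_nonneg_right h2 (hq0 n)
        _ ≤ 2 * ∑ k ∈ Finset.Ico (n / 2) n, q k := by
            rw [mul_assoc]; exact mul_le_mul_of_nonneg_left hsumge (by norm_num)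
    refine hkey.trans ?_
    have habs : ∑ k ∈ Finset.Ico (n / 2) n, q k ≤ ∑' k, q (k + n / 2) := by
      have hs : Summable (fun k => q (k + n / 2)) := (summable_nat_add_iff _).2 hsum
      have : ∑ k ∈ Finset.Ico (n / 2) n, q k = ∑ k ∈ Finset.range (n - n / 2), q (k + n / 2) := by
        rw [Finset.sum_Ico_eq_sum_range]
        exact Finset.sum_congr rfl (fun k _ => by rw [Nat.add_comm])
      rw [this]
      exact Summable.sum_le_tsum (Finset.range (n - n / 2)) (fun k _ => hq0 _) hs
    linarith

set_option maxHeartbeats 2000000 in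
theorem stmt_6 {Ω : Type*} [MeasureSpace Ω] [IsProbabilityMeasure (ℙ : Measure Ω)]
    (X : Ω → ℝ) (hX : Measurable X)
    (c : ℕ → ℝ) (hcpos : ∀ n, 1 ≤ n → 0 < c n)
    (hmono : ∀ m n, 1 ≤ m → m ≤ n → c m / Real.sqrt m ≤ c n / Real.sqrt n)
    (htop : Tendsto (fun n => c n / Real.sqrt n) atTop atTop)
    (hreg : ∀ ε > (0 : ℝ), ∃ mₑ : ℕ, 1 ≤ mₑ ∧ ∀ m n, mₑ ≤ m → m < n →
      c n / c m ≤ (1 + ε) * (n / m : ℝ))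
    (hsum : Summable (fun n => (ℙ {ω | c n ≤ |X ω|}).toReal)) :
    Tendsto (fun (n : ℕ) => (n : ℝ) * (∫ ω, (if c n < |X ω| then |X ω| else 0)) / c n)
      atTop (nhds 0) := by
  -- c is nondecreasing on [1, ∞)
  have hcm : ∀ m n : ℕ, 1 ≤ m → m ≤ n → c m ≤ c n := by
    intro m n hm hmn
    have h1 : (0:ℝ) < Real.sqrt m := Real.sqrt_pos.2 (by exact_mod_cast hm)
    have h2 : Real.sqrt m ≤ Real.sqrt n := Real.sqrt_le_sqrt (by exact_mod_cast hmn)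
    have := hmono m n hm hmn
    have h3 : c m / Real.sqrt m ≤ c n / Real.sqrt n := this
    have h4 : 0 < Real.sqrt n := lt_of_lt_of_le h1 h2
    calc c m = (c m / Real.sqrt m) * Real.sqrt m := by field_simp
      _ ≤ (c n / Real.sqrt n) * Real.sqrt n := by
          exact mul_le_mul h3 h2 (le_of_lt h1) (div_nonneg (hcpos n (le_trans hm hmn)).le h4.le)
      _ = c n := by field_simp
  -- c tends to infinity
  have hct : Tendsto c atTop atTop := by
    apply tendsto_atTop_mono' _ _ htop
    filter_upwards [eventually_ge_atTop 1] with n hn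
    have h1 : (1:ℝ) ≤ Real.sqrt n := by
      rw [show (1:ℝ) = Real.sqrt 1 by simp]
      exact Real.sqrt_le_sqrt (by exact_mod_cast hn)
    have hc := hcpos n hn
    rw [div_le_iff₀ (by linarith)]
    nlinarith
  obtain ⟨m₁, hm₁1, hm₁⟩ := hreg 1 one_pos
  have hmsX : Measurable fun ω => |X ω| := hX.abs
  set A : ℕ → Set Ω := fun j => {ω | c j < |X ω| ∧ |X ω| ≤ c (j + 1)} with hA
  have hAmeas : ∀ j, MeasurableSet (A j) := fun j =>
    (measurableSet_lt measurable_const hmsX).inter (measurableSet_le hmsX measurable_const)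
  have hBmeas : ∀ m : ℕ, MeasurableSet {ω | c m < |X ω|} := fun m =>
    measurableSet_lt measurable_const hmsX
  have hAdisj : ∀ j j' : ℕ, 1 ≤ j → j < j' → Disjoint (A j) (A j') := by
    intro j j' hj hjj'
    rw [Set.disjoint_left]
    rintro ω ⟨_, h2⟩ ⟨h3, _⟩
    have : c (j + 1) ≤ c j' := hcm (j + 1) j' (by omega) (by omega)
    linarith
  have hAcover : ∀ m : ℕ, 1 ≤ m → {ω | c m < |X ω|} = ⋃ k, A (m + k) := by
    intro m hm
    ext ω
    simp only [Set.mem_iUnion, Set.mem_setOf_eq, hA]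
    constructor
    · intro hω
      have hex : ∃ k, |X ω| ≤ c (m + k + 1) := by
        obtain ⟨N, hN⟩ := eventually_atTop.1 (hct.eventually_ge_atTop (|X ω|))
        exact ⟨N, hN (m + N + 1) (by omega)⟩
      set k := Nat.find hex with hkdef
      have hk1 : |X ω| ≤ c (m + k + 1) := Nat.find_spec hex
      have hk2 : ∀ j, j < k → ¬ (|X ω| ≤ c (m + j + 1)) := fun j hj => Nat.find_min hex hj
      refine ⟨k, ?_, hk1⟩
      rcases Nat.eq_zero_or_pos k with hk0 | hk0
      · simpa [hk0] using hω
      · have := hk2 (k - 1) (by omega)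
        push_neg at this
        have heq : m + (k - 1) + 1 = m + k := by omega
        rw [heq] at this
        exact this
    · rintro ⟨k, h1, _⟩
      calc c m ≤ c (m + k) := hcm m (m + k) hm (by omega)
        _ < |X ω| := h1
  have hBsum : ∀ m : ℕ, 1 ≤ m → ℙ {ω | c m < |X ω|} = ∑' k, ℙ (A (m + k)) := by
    intro m hm
    rw [hAcover m hm]
    exact measure_iUnion (fun k k' hne => by
      rcases lt_or_gt_of_ne hne with h | h
      · exact hAdisj (m + k) (m + k') (by omega) (by omega)
      · exact (hAdisj (m + k') (m + k) (by omega) (by omega)).symm)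
      (fun k => hAmeas (m + k))
  set Q : ℕ → ℝ≥0∞ := fun m => ℙ {ω | c m ≤ |X ω|} with hQ
  set q : ℕ → ℝ := fun m => (Q m).toReal with hq
  have hQle1 : ∀ m, Q m ≤ 1 := fun m => prob_le_one
  have hQne : ∀ m, Q m ≠ ⊤ := fun m => (lt_of_le_of_lt (hQle1 m) ENNReal.one_lt_top).ne
  have hq0 : ∀ m, 0 ≤ q m := fun m => ENNReal.toReal_nonneg
  have hQeq : ∀ m, Q m = ENNReal.ofReal (q m) := fun m => (ENNReal.ofReal_toReal (hQne m)).symm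
  have hqsum : Summable q := hsum
  have hBQ : ∀ m : ℕ, ℙ {ω | c m < |X ω|} ≤ Q m := by
    intro m
    apply measure_mono
    intro ω hω
    simp only [Set.mem_setOf_eq] at hω ⊢
    exact hω.le
  have hqanti : ∀ m n : ℕ, 1 ≤ m → m ≤ n → q n ≤ q m := by
    intro m n hm hmn
    exact ENNReal.toReal_mono (hQne m)
      (measure_mono (fun ω hω => le_trans (hcm m n hm hmn) hω))
  have key : ∀ n : ℕ, max m₁ 1 ≤ n →
      (n : ℝ) * (∫ ω, (if c n < |X ω| then |X ω| else 0)) / c n ≤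
        2 * (((n : ℝ) + 1) * q n + ∑' j, q (n + 1 + j)) := by
    intro n hn
    have h1n : 1 ≤ n := le_trans (le_max_right _ _) hn
    have hm₁n : m₁ ≤ n := le_trans (le_max_left _ _) hn
    have hcn := hcpos n h1n
    have hnR : (0:ℝ) < n := by exact_mod_cast h1n
    have h2cn : (0:ℝ) ≤ 2 * c n / n := div_nonneg (by linarith) hnR.le
    have hmeasite : Measurable fun ω => if c n < |X ω| then |X ω| else 0 :=
      Measurable.ite (hBmeas n) hmsX measurable_const
    have hnn : ∀ ω, 0 ≤ (if c n < |X ω| then |X ω| else 0) := by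
      intro ω; split_ifs with h; exacts [abs_nonneg _, le_rfl]
    have hint : (∫ ω, (if c n < |X ω| then |X ω| else 0)) =
        (∫⁻ ω, ENNReal.ofReal (if c n < |X ω| then |X ω| else 0)).toReal := by
      rw [integral_eq_lintegral_of_nonneg_ae (Filter.Eventually.of_forall hnn)
        hmeasite.aestronglyMeasurable]
    set T : ℝ≥0∞ := ∫⁻ ω, ENNReal.ofReal (if c n < |X ω| then |X ω| else 0) with hT
    set a : ℕ → ℝ≥0∞ := fun k => ℙ (A (n + k)) with ha
    have hpair : Pairwise (Function.onFun Disjoint (fun k => A (n + k))) := by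
      intro k k' hne
      rcases lt_or_gt_of_ne hne with h | h
      · exact hAdisj (n + k) (n + k') (by omega) (by omega)
      · exact (hAdisj (n + k') (n + k) (by omega) (by omega)).symm
    have hTeq : T = ∑' k, ∫⁻ ω in A (n + k), ENNReal.ofReal |X ω| := by
      rw [hT]
      rw [show (∫⁻ ω, ENNReal.ofReal (if c n < |X ω| then |X ω| else 0)) =
          ∫⁻ ω, Set.indicator {ω | c n < |X ω|} (fun ω => ENNReal.ofReal |X ω|) ω from
        lintegral_congr (fun ω => by
          by_cases h : c n < |X ω| <;> simp [Set.indicator_apply, h, Set.mem_setOf_eq])]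
      rw [lintegral_indicator (hBmeas n), hAcover n h1n,
        lintegral_iUnion (fun k => hAmeas _) hpair]
    have hstep2 : ∀ k : ℕ, ∫⁻ ω in A (n + k), ENNReal.ofReal |X ω| ≤
        ENNReal.ofReal (2 * c n / n) * (((n + k + 1 : ℕ) : ℝ≥0∞) * a k) := by
      intro k
      have hcreal : c (n + k + 1) ≤ (2 * c n / n) * ((n + k + 1 : ℕ) : ℝ) := by
        have h := hm₁ n (n + k + 1) hm₁n (by omega)
        rw [div_le_iff₀ hcn] at h
        push_cast at h ⊢
        have heq : ((1:ℝ) + 1) * ((↑n + ↑k + 1) / ↑n) * c n = 2 * c n / ↑n * (↑n + ↑k + 1) := by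
          field_simp; ring
        linarith [h, heq.symm.le, heq.le]
      calc ∫⁻ ω in A (n + k), ENNReal.ofReal |X ω|
          ≤ ∫⁻ _ω in A (n + k), ENNReal.ofReal (c (n + k + 1)) := by
            apply setLIntegral_mono' (hAmeas _)
            intro ω hω
            exact ENNReal.ofReal_le_ofReal hω.2
        _ = ENNReal.ofReal (c (n + k + 1)) * a k := by rw [setLIntegral_const]
        _ ≤ (ENNReal.ofReal (2 * c n / n) * ((n + k + 1 : ℕ) : ℝ≥0∞)) * a k := by
            apply mul_le_mul_left
            calc ENNReal.ofReal (c (n + k + 1))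
                ≤ ENNReal.ofReal ((2 * c n / n) * ((n + k + 1 : ℕ) : ℝ)) :=
                  ENNReal.ofReal_le_ofReal hcreal
              _ = ENNReal.ofReal (2 * c n / n) * ((n + k + 1 : ℕ) : ℝ≥0∞) := by
                  rw [ENNReal.ofReal_mul h2cn, ENNReal.ofReal_natCast]
        _ = _ := by rw [mul_assoc]
    have hTle : T ≤ ENNReal.ofReal (2 * c n / n) * ∑' k, (((n + k + 1 : ℕ) : ℝ≥0∞) * a k) := by
      rw [hTeq, ← ENNReal.tsum_mul_left]
      exact ENNReal.tsum_le_tsum hstep2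
    have htail : ∀ j : ℕ, ∑' k, a (j + 1 + k) ≤ Q (n + 1 + j) := by
      intro j
      have he : ∑' k, a (j + 1 + k) = ℙ {ω | c (n + j + 1) < |X ω|} := by
        rw [hBsum (n + j + 1) (by omega)]
        apply tsum_congr
        intro k
        have harith : n + (j + 1 + k) = n + j + 1 + k := by omega
        rw [ha]
        simp only []
        rw [harith]
      rw [he]
      have harith2 : n + 1 + j = n + j + 1 := by omega
      rw [harith2]
      exact hBQ _
    have hswap : ∑' k, (((n + k + 1 : ℕ) : ℝ≥0∞) * a k)
        = ((n + 1 : ℕ) : ℝ≥0∞) * (∑' k, a k) + ∑' j, ∑' k, a (j + 1 + k) := by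
      have h1 : ∀ k : ℕ, ((n + k + 1 : ℕ) : ℝ≥0∞) * a k
          = ((n + 1 : ℕ) : ℝ≥0∞) * a k + ((k : ℕ) : ℝ≥0∞) * a k := by
        intro k
        rw [← add_mul]
        congr 1
        push_cast
        ring
      rw [tsum_congr h1, ENNReal.tsum_add, ENNReal.tsum_mul_left]
      congr 1
      have h2 : ∀ k : ℕ, ((k : ℕ) : ℝ≥0∞) * a k = ∑' j, (if j < k then a k else 0) := by
        intro k
        rw [tsum_eq_sum (s := Finset.range k)
          (fun j hj => if_neg (by simpa using Finset.mem_range.not.1 hj))]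
        rw [Finset.sum_congr rfl (fun j hj => if_pos (Finset.mem_range.1 hj))]
        simp [Finset.sum_const, Finset.card_range, nsmul_eq_mul]
      rw [tsum_congr h2, ENNReal.tsum_comm]
      apply tsum_congr
      intro j
      have h3 : ∑' k, a (j + 1 + k) = ∑' k, (if j < k then a k else 0) := by
        have hginj : Function.Injective (fun k : ℕ => j + 1 + k) := fun x y h => by
          have h' : j + 1 + x = j + 1 + y := h
          omega
        have hfs : Function.support (fun k : ℕ => if j < k then a k else 0) ⊆
            Set.range (fun k : ℕ => j + 1 + k) := by
          intro x hx
          by_cases h : j < x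
          · exact ⟨x - (j + 1), show j + 1 + (x - (j + 1)) = x by omega⟩
          · simp [h] at hx
        have := hginj.tsum_eq hfs
        rw [← this]
        apply tsum_congr
        intro k
        rw [if_pos (by omega)]
      exact h3.symm
    set Wr : ℝ := ((n : ℝ) + 1) * q n + ∑' j, q (n + 1 + j) with hWr
    have hQsum' : Summable (fun j => q (n + 1 + j)) := by
      have hfeq : (fun j => q (n + 1 + j)) = (fun j => q (j + (n + 1))) := by
        funext j; congr 1; omega
      rw [hfeq]
      exact (summable_nat_add_iff (n + 1)).2 hqsum
    have hWr0 : 0 ≤ Wr :=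
      add_nonneg (mul_nonneg (by positivity) (hq0 n)) (tsum_nonneg fun j => hq0 _)
    have hW : ∑' k, (((n + k + 1 : ℕ) : ℝ≥0∞) * a k) ≤ ENNReal.ofReal Wr := by
      rw [hswap]
      have hsum_a : ∑' k, a k ≤ Q n := by
        rw [ha]
        simp only []
        rw [← hBsum n h1n]
        exact hBQ n
      have hle : ((n + 1 : ℕ) : ℝ≥0∞) * (∑' k, a k) + ∑' j, ∑' k, a (j + 1 + k)
          ≤ ((n + 1 : ℕ) : ℝ≥0∞) * Q n + ∑' j, Q (n + 1 + j) :=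
        add_le_add (mul_le_mul_right hsum_a _) (ENNReal.tsum_le_tsum htail)
      refine hle.trans (le_of_eq ?_)
      rw [hWr, ENNReal.ofReal_add (mul_nonneg (by positivity) (hq0 n))
        (tsum_nonneg fun j => hq0 _)]
      congr 1
      · rw [ENNReal.ofReal_mul (by positivity), hQeq n]
        congr 1
        rw [show ((n:ℝ) + 1) = ((n + 1 : ℕ) : ℝ) by push_cast; ring, ENNReal.ofReal_natCast]
      · rw [ENNReal.ofReal_tsum_of_nonneg (fun j => hq0 _) hQsum']
        apply tsum_congr
        intro j
        exact hQeq _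
    have hTfinal : T ≤ ENNReal.ofReal ((2 * c n / n) * Wr) := by
      calc T ≤ ENNReal.ofReal (2 * c n / n) * ∑' k, (((n + k + 1 : ℕ) : ℝ≥0∞) * a k) := hTle
        _ ≤ ENNReal.ofReal (2 * c n / n) * ENNReal.ofReal Wr := mul_le_mul_right hW _
        _ = ENNReal.ofReal ((2 * c n / n) * Wr) := (ENNReal.ofReal_mul h2cn).symm
    have hTr : T.toReal ≤ (2 * c n / n) * Wr :=
      ENNReal.toReal_le_of_le_ofReal (mul_nonneg h2cn hWr0) hTfinal
    rw [hint]
    calc (n : ℝ) * T.toReal / c n ≤ (n : ℝ) * ((2 * c n / n) * Wr) / c n := by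
          have hn0 : (0:ℝ) ≤ n := hnR.le
          gcongr
      _ = 2 * Wr := by field_simp
  have hq_to_zero : Tendsto q atTop (nhds 0) := hqsum.tendsto_atTop_zero
  have hnq : Tendsto (fun n : ℕ => (n : ℝ) * q n) atTop (nhds 0) :=
    aux_nat_mul q hq0 hqanti hqsum
  have h1 : Tendsto (fun n : ℕ => ((n : ℝ) + 1) * q n) atTop (nhds 0) := by
    have := hnq.add hq_to_zero
    simpa [add_mul, one_mul] using this
  have h2 : Tendsto (fun n : ℕ => ∑' j, q (n + 1 + j)) atTop (nhds 0) := by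
    have hcomp := (tendsto_sum_nat_add q).comp (tendsto_add_atTop_nat 1)
    have heq2 : (fun n : ℕ => ∑' k, q (k + (n + 1))) = fun n : ℕ => ∑' j, q (n + 1 + j) := by
      funext n
      exact tsum_congr fun k => by rw [Nat.add_comm]
    exact heq2 ▸ hcomp
  have hR : Tendsto (fun n : ℕ => 2 * (((n : ℝ) + 1) * q n + ∑' j, q (n + 1 + j)))
      atTop (nhds 0) := by
    have := (h1.add h2).const_mul 2
    simpa using this
  apply squeeze_zero' ?_ ?_ hR
  · filter_upwards [eventually_ge_atTop 1] with n hn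
    have hnn : ∀ ω, 0 ≤ (if c n < |X ω| then |X ω| else 0) := by
      intro ω; split_ifs; exacts [abs_nonneg _, le_rfl]
    exact div_nonneg (mul_nonneg (Nat.cast_nonneg n) (integral_nonneg hnn)) (hcpos n hn).le
  · filter_upwards [eventually_ge_atTop (max m₁ 1)] with n hn
    exact key n hn
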